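/- For any subset A of a topological space X, the e*-θ-closure operator is idempotent: e*-cl_θ(e*-cl_θ(A)) = e*-cl_θ(A). -/

import Mathlib

open Set Topology

variable {X : Type*} [TopologicalSpace X]

/-- δ-closure of A. -/
def deltaCl (A : Set X) : Set X :=
  {x | ∀ U : Set X, IsOpen U → x ∈ U → (interior (closure U) ∩ A).Nonempty}

/-- A is e*-open if A ⊆ cl(int(δ-cl A)). -/
def EStarOpen (A : Set X) : Prop := A ⊆ closure (interior (deltaCl A))

/-- A is e*-closed if its complement is e*-open. -/
def EStarClosed (A : Set X) : Prop := EStarOpen Aᶜ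

/-- e*-closure: intersection of all e*-closed supersets. -/
def eStarCl (A : Set X) : Set X := ⋂₀ {F | EStarClosed F ∧ A ⊆ F}

/-- e*-interior: union of all e*-open subsets. -/
def eStarInt (A : Set X) : Set X := ⋃₀ {U | EStarOpen U ∧ U ⊆ A}

/-- e*-regular: both e*-open and e*-closed. -/
def EStarRegular (A : Set X) : Prop := EStarOpen A ∧ EStarClosed A

/-- e*-θ-closure. -/
def eStarClTheta (A : Set X) : Set X :=
  {x | ∀ U : Set X, EStarOpen U → x ∈ U → (eStarCl U ∩ A).Nonempty}

/-- e*-θ-closed. -/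
def EStarThetaClosed (A : Set X) : Prop := A = eStarClTheta A

/-- e*-θ-open. -/
def EStarThetaOpen (A : Set X) : Prop := EStarThetaClosed Aᶜ

/-- quasi e*-θ-closed. -/
def QEStarThetaClosed (A : Set X) : Prop :=
  ∀ U : Set X, EStarThetaOpen U → A ⊆ U → eStarClTheta A ⊆ U

/-- e*-θ-kernel. -/
def eStarKerTheta (A : Set X) : Set X := ⋂₀ {U | EStarThetaOpen U ∧ A ⊆ U}

/-!
The e*-closure `V` of an e*-open set `U` is e*-closed, and it is again e*-open: it lies in the
e*-closed set `cl (int (δ-cl U))`, which is contained in `cl (int (δ-cl V))` by monotonicity of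
the δ-closure. So `V` is an admissible neighbourhood in the definition of the e*-θ-closure with
`e*-cl V = V`, and a point of `e*-cl U` lying in `e*-cl_θ A` already gives a point of `e*-cl U`
in `A`.
-/

lemma subset_deltaCl (A : Set X) : A ⊆ deltaCl A :=
  fun x hx _ hU hxU => ⟨x, interior_maximal subset_closure hU hxU, hx⟩

lemma deltaCl_mono {A B : Set X} (h : A ⊆ B) : deltaCl A ⊆ deltaCl B := by
  intro x hx U hU hxU
  obtain ⟨y, hyU, hyA⟩ := hx U hU hxU
  exact ⟨y, hyU, h hyA⟩

lemma IsOpen.eStarOpen {U : Set X} (hU : IsOpen U) : EStarOpen U :=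
  (hU.subset_interior_iff.mpr (subset_deltaCl U)).trans subset_closure

lemma IsClosed.eStarClosed {F : Set X} (hF : IsClosed F) : EStarClosed F :=
  hF.isOpen_compl.eStarOpen

lemma eStarOpen_sUnion {S : Set (Set X)} (h : ∀ U ∈ S, EStarOpen U) : EStarOpen (⋃₀ S) := by
  rintro x ⟨U, hUS, hxU⟩
  exact closure_mono (interior_mono (deltaCl_mono (subset_sUnion_of_mem hUS))) (h U hUS hxU)

lemma eStarClosed_sInter {S : Set (Set X)} (h : ∀ F ∈ S, EStarClosed F) :
    EStarClosed (⋂₀ S) := by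
  rw [EStarClosed, compl_sInter]
  exact eStarOpen_sUnion (by rintro _ ⟨F, hFS, rfl⟩; exact h F hFS)

lemma eStarClosed_eStarCl (A : Set X) : EStarClosed (eStarCl A) :=
  eStarClosed_sInter fun _ hF => hF.1

lemma subset_eStarCl (A : Set X) : A ⊆ eStarCl A :=
  subset_sInter fun _ hF => hF.2

lemma eStarCl_subset {A F : Set X} (hF : EStarClosed F) (h : A ⊆ F) : eStarCl A ⊆ F :=
  sInter_subset_of_mem ⟨hF, h⟩

lemma EStarClosed.eStarCl_eq {F : Set X} (hF : EStarClosed F) : eStarCl F = F :=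
  (eStarCl_subset hF subset_rfl).antisymm (subset_eStarCl F)

lemma eStarOpen_eStarCl {U : Set X} (hU : EStarOpen U) : EStarOpen (eStarCl U) :=
  calc eStarCl U ⊆ closure (interior (deltaCl U)) :=
        eStarCl_subset isClosed_closure.eStarClosed hU
    _ ⊆ closure (interior (deltaCl (eStarCl U))) :=
      closure_mono (interior_mono (deltaCl_mono (subset_eStarCl U)))

lemma subset_eStarClTheta (A : Set X) : A ⊆ eStarClTheta A :=
  fun x hx U _ hxU => ⟨x, subset_eStarCl U hxU, hx⟩

lemma eStarClTheta_eStarClTheta_subset (A : Set X) :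
    eStarClTheta (eStarClTheta A) ⊆ eStarClTheta A := by
  intro x hx U hU hxU
  obtain ⟨y, hyU, hyA⟩ := hx U hU hxU
  simpa only [(eStarClosed_eStarCl U).eStarCl_eq] using hyA (eStarCl U) (eStarOpen_eStarCl hU) hyU

theorem stmt7 (A : Set X) : eStarClTheta (eStarClTheta A) = eStarClTheta A :=
  (eStarClTheta_eStarClTheta_subset A).antisymm (subset_eStarClTheta _)
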